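/- arXiv:2406.14561 — 4 statements merged into one kernel-verified Lean document; each statement's English description precedes it below -/
import Mathlib

section
/- Let T : L* → V* be the concatenative extension of an injective eow-marking tokeniser τ : L → V_mid* ∘ V_eow, p a probability distribution over L*, and q its pushforward to V*. Then for any w ∈ L*: Σ_{u ∈ w ∘ L*} p(u) = Σ_{x ∈ T(w) ∘ V*} q(x), i.e., the prefix probability of the word sequence w under p equals the prefix probability of T(w) under q. -/
open scoped ENNReal

/-!
Because every token sequence `τ a` ends in the only end-of-word token it contains, `τ` is a
prefix code with nonempty codewords, so `T(w) <+: T(u) ↔ w <+: u`. Hence the strings of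
`T(w) ∘ V*` carrying mass under `q` are exactly the images of `w ∘ L*`, and both prefix
probabilities equal `∑ p u` over `u` extending `w` (swap the two sums defining the right side).
-/

theorem List.IsPrefix.eq_of_last_notMem {α : Type*} {l₁ l₂ : List α} {a b : α}
    (h : l₁ ++ [a] <+: l₂ ++ [b]) (ha : a ∉ l₂) : l₁ ++ [a] = l₂ ++ [b] := by
  refine (List.prefix_concat_iff.mp h).resolve_right fun h' => ha (h'.subset ?_)
  simp

theorem List.flatten_map_prefix_flatten_map_iff {α β : Type*} {f : α → List β}
    (hf : ∀ a b, f a <+: f b → a = b) (hne : ∀ a, f a ≠ []) {w u : List α} :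
    (w.map f).flatten <+: (u.map f).flatten ↔ w <+: u := by
  induction w generalizing u with
  | nil => simp
  | cons a w ih =>
    refine ⟨fun h => ?_, fun h => (h.map f).flatten⟩
    cases u with
    | nil => simpa [hne a] using h.length_le
    | cons b u =>
      simp only [List.map_cons, List.flatten_cons] at h
      -- `f a` and `f b` are both prefixes of `f b ++ _`, hence comparable.
      have hab : a = b := by
        rcases List.prefix_or_prefix_of_prefix ((List.prefix_append _ _).trans h)
          (List.prefix_append _ _) with hc | hc
        exacts [hf a b hc, (hf b a hc).symm]
      subst hab
      exact List.cons_prefix_cons.mpr ⟨rfl, ih.mp ((List.prefix_append_right_inj _).mp h)⟩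

theorem ENNReal.tsum_subtype_eq_tsum_subtype_pushforward {α β : Type*} [DecidableEq β]
    (f : α → β) (p : α → ℝ≥0∞) {P : α → Prop} {Q : β → Prop} (hPQ : ∀ u, Q (f u) ↔ P u) :
    ∑' u : {u // P u}, p u =
      ∑' x : {x // Q x}, ∑' u, p u * if x.val = f u then 1 else 0 := by
  have hfiber : ∀ u, (∑' x : {x // Q x}, p u * if x.val = f u then 1 else 0) =
      {u | P u}.indicator p u := by
    intro u
    by_cases hu : P u
    · rw [tsum_eq_single ⟨f u, (hPQ u).mpr hu⟩]
      · simp [hu]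
      · intro x hx
        have : x.val ≠ f u := fun h => hx (Subtype.ext h)
        simp [this]
    · have : ∀ x : {x // Q x}, x.val ≠ f u := fun x h => hu ((hPQ u).mp (h ▸ x.property))
      simp [hu, this]
  rw [ENNReal.tsum_comm]
  exact (tsum_subtype {u | P u} p).trans (tsum_congr hfiber).symm

theorem stmt_7_general {L V : Type*} [DecidableEq V] (Vmid Veow : Set V)
    (hdisj : Disjoint Vmid Veow)
    (τ : L → List V) (hτ : Function.Injective τ)
    (hshape : ∀ w : L, ∃ (m : List V) (e : V),
      (∀ a ∈ m, a ∈ Vmid) ∧ e ∈ Veow ∧ τ w = m ++ [e])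
    (p : List L → ℝ≥0∞)
    (q : List V → ℝ≥0∞)
    (hq : ∀ x : List V, q x = ∑' u : List L, p u * (if x = (u.map τ).flatten then 1 else 0))
    (w : List L) :
    ∑' u : {u : List L // w <+: u}, p u.val =
      ∑' x : {x : List V // (w.map τ).flatten <+: x}, q x.val := by
  have hprefixCode : ∀ a b, τ a <+: τ b → a = b := by
    intro a b h
    obtain ⟨ma, ea, -, hea, ha⟩ := hshape a
    obtain ⟨mb, eb, hmb, -, hb⟩ := hshape b
    apply hτ
    rw [ha, hb] at h ⊢
    exact h.eq_of_last_notMem fun he => hdisj.notMem_of_mem_left (hmb _ he) hea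
  have hne : ∀ a, τ a ≠ [] := fun a => by
    obtain ⟨m, e, -, -, h⟩ := hshape a
    simp [h]
  simp only [hq]
  exact ENNReal.tsum_subtype_eq_tsum_subtype_pushforward _ p fun u =>
    List.flatten_map_prefix_flatten_map_iff hprefixCode hne

theorem stmt_7 {L V : Type*} [Countable L] [Countable V] [DecidableEq V] (Vmid Veow : Set V)
    (hdisj : Disjoint Vmid Veow) (hcover : Vmid ∪ Veow = Set.univ)
    (τ : L → List V) (hτ : Function.Injective τ)
    (hshape : ∀ w : L, ∃ (m : List V) (e : V),
      (∀ a ∈ m, a ∈ Vmid) ∧ e ∈ Veow ∧ τ w = m ++ [e])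
    (hTinj : Function.Injective (fun ws : List L => (ws.map τ).flatten))
    (p : List L → ℝ≥0∞) (hp : ∑' u : List L, p u = 1)
    (q : List V → ℝ≥0∞)
    (hq : ∀ x : List V, q x = ∑' u : List L, p u * (if x = (u.map τ).flatten then 1 else 0))
    (w : List L) :
    ∑' u : {u : List L // w <+: u}, p u.val =
      ∑' x : {x : List V // (w.map τ).flatten <+: x}, q x.val :=
  stmt_7_general Vmid Veow hdisj τ hτ hshape p q hq w
end

section
/- Let T : L* → V* be the concatenative extension of an injective bow-marking tokeniser, p a distribution over L*, and q its pushforward. Then for any w ∈ L*: Σ_{u ∈ w ∘ L*} p(u) = q(T(w)) + Σ_{v ∈ V_bow, x' ∈ V*} q(T(w) ∘ v ∘ x'), i.e., the prefix probability of w equals the q-probability mass of T(w) ∘ ({ε} ∪ V_bow ∘ V*). -/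
open scoped ENNReal

section aux

variable {L V : Type*} {Vbow Vmid : Set V} {τ : L → List V}

/-- T w is empty or starts with a bow symbol. -/
lemma aux_Thead (hshape : ∀ w : L, ∃ (v : V) (m : List V),
      v ∈ Vbow ∧ (∀ a ∈ m, a ∈ Vmid) ∧ τ w = v :: m) :
    ∀ w : List L, (w.map τ).flatten = [] ∨
      ∃ v ∈ Vbow, ∃ r, (w.map τ).flatten = v :: r := by
  intro w
  cases w with
  | nil => exact Or.inl rfl
  | cons a w' =>
    obtain ⟨v, m, hv, hm, hτa⟩ := hshape a
    exact Or.inr ⟨v, hv, m ++ (w'.map τ).flatten, by simp [hτa]⟩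

lemma aux_key (hdisj : Disjoint Vbow Vmid) (hτ : Function.Injective τ)
    (hshape : ∀ w : L, ∃ (v : V) (m : List V),
      v ∈ Vbow ∧ (∀ a ∈ m, a ∈ Vmid) ∧ τ w = v :: m) :
    ∀ (w u : List L) (t : List V),
      (t = [] ∨ ∃ v ∈ Vbow, ∃ t', t = v :: t') →
      (u.map τ).flatten = (w.map τ).flatten ++ t → w <+: u := by
  intro w
  induction w with
  | nil => intro u t _ _; exact List.nil_prefix
  | cons a w' ih =>
    intro u t ht h
    obtain ⟨v, m, hv, hm, hτa⟩ := hshape a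
    cases u with
    | nil => simp [hτa] at h
    | cons b u' =>
      obtain ⟨v2, m2, hv2, hm2, hτb⟩ := hshape b
      simp only [List.map_cons, List.flatten_cons, List.append_assoc] at h
      -- τ b ++ T u' = τ a ++ (T w' ++ t)
      have hpre : τ a <+: τ b ∨ τ b <+: τ a := by
        apply List.prefix_or_prefix_of_prefix (l₃ := τ b ++ (u'.map τ).flatten)
        · rw [h]; exact ⟨(w'.map τ).flatten ++ t, rfl⟩
        · exact ⟨(u'.map τ).flatten, rfl⟩
      have hab : τ a = τ b := by
        rcases hpre with ⟨d, hd⟩ | ⟨d, hd⟩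
        · -- τ b = τ a ++ d
          cases d with
          | nil => rw [← hd]; simp
          | cons e d' =>
            exfalso
            -- e ∈ Vmid
            have hemid : e ∈ Vmid := by
              apply hm2
              have : v2 :: m2 = v :: (m ++ e :: d') := by
                rw [← hτb, ← hd, hτa]; simp
              have := (List.cons.injEq _ _ _ _).mp this |>.2
              rw [this]; simp
            -- d ++ T u' = T w' ++ t, with head e
            have h2 : (e :: d') ++ (u'.map τ).flatten = (w'.map τ).flatten ++ t := by
              have := h
              rw [← hd] at this
              simpa using this
            -- head of RHS is in Vbow
            have hebow : e ∈ Vbow := by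
              rcases aux_Thead hshape w' with hw0 | ⟨v3, hv3, r, hr⟩
              · rw [hw0] at h2
                rcases ht with rfl | ⟨v3, hv3, t', rfl⟩
                · simp at h2
                · simp at h2
                  rw [h2.1]; exact hv3
              · rw [hr] at h2
                simp at h2
                rw [h2.1]; exact hv3
            exact hdisj.ne_of_mem hebow hemid rfl
        · -- τ a = τ b ++ d
          cases d with
          | nil => rw [← hd]; simp
          | cons e d' =>
            exfalso
            have hemid : e ∈ Vmid := by
              apply hm
              have : v :: m = v2 :: (m2 ++ e :: d') := by
                rw [← hτa, ← hd, hτb]; simp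
              have := (List.cons.injEq _ _ _ _).mp this |>.2
              rw [this]; simp
            -- T u' = d ++ T w' ++ t
            have h2 : (u'.map τ).flatten = (e :: d') ++ ((w'.map τ).flatten ++ t) := by
              rw [← hd] at h
              simp only [List.append_assoc] at h
              exact (List.append_cancel_left h)
            have hebow : e ∈ Vbow := by
              rcases aux_Thead hshape u' with hu0 | ⟨v3, hv3, r, hr⟩
              · rw [hu0] at h2; simp at h2
              · rw [hr] at h2
                simp at h2
                rw [← h2.1]; exact hv3
            exact hdisj.ne_of_mem hebow hemid rfl
      have hab' : a = b := hτ hab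
      subst hab'
      have h3 : (u'.map τ).flatten = (w'.map τ).flatten ++ t :=
        List.append_cancel_left (by rw [← hab] at h; exact h)
      exact List.cons_prefix_cons.mpr ⟨rfl, ih u' t ht h3⟩

end aux

theorem stmt_10 {L V : Type*} [Countable L] [Countable V] [DecidableEq V] (Vbow Vmid : Set V)
    (hdisj : Disjoint Vbow Vmid) (hcover : Vbow ∪ Vmid = Set.univ)
    (τ : L → List V) (hτ : Function.Injective τ)
    (hshape : ∀ w : L, ∃ (v : V) (m : List V),
      v ∈ Vbow ∧ (∀ a ∈ m, a ∈ Vmid) ∧ τ w = v :: m)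
    (p : List L → ℝ≥0∞) (hp : ∑' u : List L, p u = 1)
    (q : List V → ℝ≥0∞)
    (hq : ∀ x : List V, q x = ∑' u : List L, p u * (if x = (u.map τ).flatten then 1 else 0))
    (w : List L) :
    ∑' u : {u : List L // w <+: u}, p u.val =
      q ((w.map τ).flatten) +
        ∑' x : {x : List V // ∃ (v : V) (x' : List V),
          v ∈ Vbow ∧ x = (w.map τ).flatten ++ v :: x'}, q x.val := by
  classical
  set T : List L → List V := fun u => (u.map τ).flatten with hT
  set S : Set (List V) := {x | ∃ (v : V) (x' : List V), v ∈ Vbow ∧ x = T w ++ v :: x'} with hS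
  -- characterization of membership
  have hchar : ∀ u : List L, (T u = T w ∨ T u ∈ S) ↔ w <+: u := by
    intro u
    constructor
    · rintro (h | ⟨v, x', hv, h⟩)
      · exact aux_key hdisj hτ hshape w u [] (Or.inl rfl) (by simpa using h)
      · exact aux_key hdisj hτ hshape w u (v :: x') (Or.inr ⟨v, hv, x', rfl⟩) h
    · rintro ⟨r, rfl⟩
      cases r with
      | nil => left; simp
      | cons c r' =>
        right
        obtain ⟨v, m, hv, hm, hτc⟩ := hshape c
        exact ⟨v, m ++ (r'.map τ).flatten, hv, by simp [hT, hτc]⟩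
  have hdisj2 : ∀ u : List L, T u = T w → T u ∉ S := by
    rintro u h ⟨v, x', hv, h2⟩
    rw [h] at h2
    have := congrArg List.length h2
    simp at this
  -- q (T w) as a sum
  have hq1 : q (T w) = ∑' u : List L, p u * (if T u = T w then 1 else 0) := by
    rw [hq]
    congr 1; funext u; congr 1; simp [eq_comm, hT]
  -- the S-sum as a sum over u
  have hq2 : (∑' x : S, q x.val) = ∑' u : List L, p u * (if T u ∈ S then 1 else 0) := by
    calc (∑' x : S, q x.val) = ∑' (x : S) (u : List L), p u * (if x.val = T u then 1 else 0) := by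
          congr 1; funext x; rw [hq]
      _ = ∑' (u : List L) (x : S), p u * (if x.val = T u then 1 else 0) := ENNReal.tsum_comm
      _ = ∑' u : List L, p u * (if T u ∈ S then 1 else 0) := by
          congr 1; funext u
          by_cases hmem : T u ∈ S
          · rw [if_pos hmem, mul_one]
            rw [tsum_eq_single (⟨T u, hmem⟩ : S)]
            · simp
            · intro b hb
              rw [if_neg, mul_zero]
              exact fun hbe => hb (Subtype.ext hbe)
          · rw [if_neg hmem, mul_zero]
            apply ENNReal.tsum_eq_zero.mpr
            intro x
            rw [if_neg, mul_zero]
            intro hxe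
            exact hmem (hxe ▸ x.2)
  -- LHS as a sum over all u
  have hlhs : (∑' u : {u : List L // w <+: u}, p u.val)
      = ∑' u : List L, p u * (if w <+: u then 1 else 0) := by
    rw [show (∑' u : {u : List L // w <+: u}, p u.val)
        = ∑' u : ({u : List L | w <+: u} : Set (List L)), p u.val from rfl,
      tsum_subtype {u : List L | w <+: u} p]
    congr 1; funext u
    by_cases h : w <+: u
    · simp [Set.indicator_apply, Set.mem_setOf_eq, h]
    · simp [Set.indicator_apply, Set.mem_setOf_eq, h]
  rw [hlhs, hq1]
  rw [show (∑' x : {x : List V // ∃ (v : V) (x' : List V),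
        v ∈ Vbow ∧ x = (w.map τ).flatten ++ v :: x'}, q x.val) = ∑' x : S, q x.val from rfl, hq2,
    ← ENNReal.tsum_add]
  congr 1; funext u
  rw [← mul_add]
  congr 1
  by_cases h : w <+: u
  · rw [if_pos h]
    rcases (hchar u).mpr h with h1 | h1
    · rw [if_pos h1, if_neg (hdisj2 u h1)]; simp
    · rw [if_pos h1, if_neg]
      · simp
      · intro h2; exact hdisj2 u h2 h1
  · rw [if_neg h, if_neg, if_neg]
    · simp
    · exact fun h1 => h ((hchar u).mp (Or.inr h1))
    · exact fun h1 => h ((hchar u).mp (Or.inl h1))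
end

section
/- For a bow-marking tokeniser with pushforward distribution q, the word-in-context probability satisfies: p(w | w_{<t}) = q(τ(w) | T(w_{<t})) · [Σ_{v ∈ V_bow ∪ {eos}} q(v | T(w_{<t}) ∘ τ(w))] / [Σ_{v ∈ V_bow ∪ {eos}} q(v | T(w_{<t}))], where q(v | x) is the conditional subword probability and q(eos | x) = q(x)/P_q(x ∘ V*), assuming all denominators are positive. -/
open scoped ENNReal BigOperators

/-- Prefix probability of a sequence under a distribution over sequences. -/
noncomputable def prefP {A : Type*} (p : List A → ℝ≥0∞) (s : List A) : ℝ≥0∞ :=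
  ∑' y : {y : List A // s <+: y}, p y.val

/-- Conditional next-symbol probability. -/
noncomputable def condP {A : Type*} (p : List A → ℝ≥0∞) (v : A) (s : List A) : ℝ≥0∞ :=
  prefP p (s ++ [v]) / prefP p s

/-- Conditional end-of-sequence probability. -/
noncomputable def eosP {A : Type*} (p : List A → ℝ≥0∞) (s : List A) : ℝ≥0∞ :=
  p s / prefP p s

/-!
Write `T s` for `(s.map τ).flatten`. Since `τ` is injective and marks the start of every word,
a token string extending `T s` by `[]` or by a string starting with a beginning-of-word symbol
decodes uniquely to a word sequence extending `s`. Hence `P_p(s ∘ L*)` is the token-level mass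
of `T s` followed by end-of-sequence or by a beginning-of-word symbol, i.e. `P_q(T s ∘ V*)`
times the bracketed boundary sum. The chain rule writes `P_q(T(w_{<t}) ∘ τ(w) ∘ V*)` as
`P_q(T(w_{<t}) ∘ V*)` times the product of subword conditionals, and in the ratio of the two
word-level prefix probabilities the common factor `P_q(T(w_{<t}) ∘ V*)` cancels.
-/

section PrefixProbability

variable {A : Type*}

theorem prefP_eq_tsum [DecidableEq A] (p : List A → ℝ≥0∞) (s : List A) :
    prefP p s = ∑' u, p u * if s <+: u then 1 else 0 := by
  simp only [mul_ite, mul_one, mul_zero]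
  exact (tsum_subtype {u | s <+: u} p).trans (tsum_congr fun u => Set.indicator_apply _ _ _)

theorem prefP_mul_condP {p : List A → ℝ≥0∞} {s : List A} (h0 : prefP p s ≠ 0)
    (htop : prefP p s ≠ ⊤) (a : A) : prefP p s * condP p a s = prefP p (s ++ [a]) :=
  ENNReal.mul_div_cancel h0 htop

theorem prefP_append_eq_mul_prod_condP {p : List A → ℝ≥0∞} (t : List A) {s : List A}
    (h0 : ∀ r, r <+: t → prefP p (s ++ r) ≠ 0) (htop : ∀ r, prefP p r ≠ ⊤) :
    prefP p (s ++ t) = prefP p s * ∏ i : Fin t.length, condP p (t.get i) (s ++ t.take i) := by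
  induction t generalizing s with
  | nil => simp
  | cons a t ih =>
    have h0' : ∀ r, r <+: t → prefP p (s ++ [a] ++ r) ≠ 0 := fun r hr => by
      simpa using h0 (a :: r) (List.cons_prefix_cons.2 ⟨rfl, hr⟩)
    have hs : prefP p s ≠ 0 := by simpa using h0 [] List.nil_prefix
    simp only [List.length_cons, Fin.prod_univ_succ, List.get_eq_getElem, Fin.val_zero,
      List.getElem_cons_zero, List.take_zero, List.append_nil, Fin.val_succ,
      List.getElem_cons_succ, List.take_succ_cons]
    rw [← mul_assoc, prefP_mul_condP hs (htop s)]
    simpa only [List.append_assoc, List.cons_append, List.nil_append, List.get_eq_getElem]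
      using ih h0'

theorem tsum_ite_append_singleton_prefix_eq_one [DecidableEq A] {S : Set A} {X Y : List A}
    {a : A} (ha : a ∈ S) (hY : X ++ [a] <+: Y) :
    ∑' v : S, (if X ++ [v.1] <+: Y then 1 else 0 : ℝ≥0∞) = 1 := by
  refine (tsum_eq_single ⟨a, ha⟩ fun v hv => if_neg fun hvY => hv (Subtype.ext ?_)).trans
    (if_pos hY)
  simpa using (List.prefix_of_prefix_length_le hvY hY (by simp)).eq_of_length (by simp)

end PrefixProbability

section Pushforward

variable {L V : Type*} [DecidableEq V] {τ : L → List V} {p : List L → ℝ≥0∞}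
  {q : List V → ℝ≥0∞}

theorem prefP_pushforward
    (hq : ∀ x, q x = ∑' u, p u * if x = (u.map τ).flatten then 1 else 0) (x : List V) :
    prefP q x = ∑' u, p u * if x <+: (u.map τ).flatten then 1 else 0 := by
  simp_rw [prefP_eq_tsum, hq, ← ENNReal.tsum_mul_right]
  rw [ENNReal.tsum_comm]
  refine tsum_congr fun u => ?_
  rw [tsum_eq_single (u.map τ).flatten fun y hy => by simp [hy]]
  simp

theorem prefP_pushforward_le_tsum
    (hq : ∀ x, q x = ∑' u, p u * if x = (u.map τ).flatten then 1 else 0) (x : List V) :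
    prefP q x ≤ ∑' u, p u := by
  rw [prefP_pushforward hq]
  exact ENNReal.tsum_le_tsum fun u => mul_le_of_le_one_right' (by split_ifs <;> simp)

end Pushforward

def IsBowMarking {L V : Type*} (Vbow Vmid : Set V) (τ : L → List V) : Prop :=
  ∀ w, ∃ (v : V) (m : List V), v ∈ Vbow ∧ (∀ a ∈ m, a ∈ Vmid) ∧ τ w = v :: m

namespace IsBowMarking

variable {L V : Type*} {Vbow Vmid : Set V} {τ : L → List V}

theorem mem_of_eq_append_cons (h : IsBowMarking Vbow Vmid τ) {a b : L} {c : List V} {d : V}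
    (hab : τ b = τ a ++ d :: c) : d ∈ Vmid := by
  obtain ⟨v, m, -, hm, hb⟩ := h b
  obtain ⟨v', m', -, -, ha⟩ := h a
  rw [hb, ha, List.cons_append, List.cons.injEq] at hab
  exact hm d (by simp [hab.2])

theorem eq_nil_of_eq_append (h : IsBowMarking Vbow Vmid τ) (hdisj : Disjoint Vbow Vmid)
    {a b : L} {c : List V} (hc : ∀ v ∈ c.head?, v ∈ Vbow) (hab : τ b = τ a ++ c) : c = [] := by
  rcases c with _ | ⟨d, c⟩
  · rfl
  · exact (Set.disjoint_left.1 hdisj (hc d rfl) (h.mem_of_eq_append_cons hab)).elim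

theorem eq_of_append_eq_append (h : IsBowMarking Vbow Vmid τ) (hdisj : Disjoint Vbow Vmid)
    {a b : L} {A B : List V} (hA : ∀ v ∈ A.head?, v ∈ Vbow) (hB : ∀ v ∈ B.head?, v ∈ Vbow)
    (hab : τ a ++ A = τ b ++ B) : τ a = τ b := by
  have head_of_eq_append : ∀ {c C D : List V}, (∀ v ∈ C.head?, v ∈ Vbow) → C = c ++ D →
      ∀ v ∈ c.head?, v ∈ Vbow := fun hC hCD v hv =>
    hC v (by simpa [hCD, List.head?_append] using Or.inl hv)
  rcases List.append_eq_append_iff.1 hab with ⟨c, hb, hA'⟩ | ⟨c, ha, hB'⟩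
  · simpa [h.eq_nil_of_eq_append hdisj (head_of_eq_append hA hA') hb] using hb.symm
  · simpa [h.eq_nil_of_eq_append hdisj (head_of_eq_append hB hB') ha] using ha

theorem head?_flatten_append (h : IsBowMarking Vbow Vmid τ) (s : List L) {A : List V}
    (hA : ∀ v ∈ A.head?, v ∈ Vbow) : ∀ v ∈ ((s.map τ).flatten ++ A).head?, v ∈ Vbow := by
  rcases s with _ | ⟨a, s⟩
  · simpa using hA
  · obtain ⟨v, m, hv, -, ha⟩ := h a
    simpa [ha] using hv

theorem prefix_of_flatten_eq_append (h : IsBowMarking Vbow Vmid τ) (hdisj : Disjoint Vbow Vmid)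
    (hτ : Function.Injective τ) {s u : List L} {A : List V} (hA : ∀ v ∈ A.head?, v ∈ Vbow)
    (hsu : (u.map τ).flatten = (s.map τ).flatten ++ A) : s <+: u := by
  induction s generalizing u with
  | nil => exact List.nil_prefix
  | cons a s ih =>
    rcases u with _ | ⟨b, u⟩
    · obtain ⟨v, m, -, -, ha⟩ := h a
      simp [ha] at hsu
    · simp only [List.map_cons, List.flatten_cons, List.append_assoc] at hsu
      have hba := h.eq_of_append_eq_append hdisj
        (by simpa using h.head?_flatten_append u (A := []) (by simp))
        (h.head?_flatten_append s hA) hsu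
      rw [hba] at hsu
      obtain rfl := hτ hba
      exact List.cons_prefix_cons.2 ⟨rfl, ih (List.append_cancel_left hsu)⟩

theorem flatten_injective (h : IsBowMarking Vbow Vmid τ) (hdisj : Disjoint Vbow Vmid)
    (hτ : Function.Injective τ) : Function.Injective fun s : List L => (s.map τ).flatten := by
  intro s u hsu
  have hs := h.prefix_of_flatten_eq_append hdisj hτ (A := []) (by simp) (by simpa using hsu.symm)
  have hu := h.prefix_of_flatten_eq_append hdisj hτ (A := []) (by simp) (by simpa using hsu)
  exact hs.eq_of_length (le_antisymm hs.length_le hu.length_le)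

theorem tsum_ite_prefix_bow [DecidableEq L] [DecidableEq V] (h : IsBowMarking Vbow Vmid τ)
    (hdisj : Disjoint Vbow Vmid) (hτ : Function.Injective τ) (s u : List L) :
    ∑' v : Vbow, (if (s.map τ).flatten ++ [v.1] <+: (u.map τ).flatten then 1 else 0 : ℝ≥0∞)
      = if s <+: u ∧ s ≠ u then 1 else 0 := by
  split_ifs with hsu
  · obtain ⟨⟨_ | ⟨d, c⟩, rfl⟩, hne⟩ := hsu
    · simp at hne
    obtain ⟨v, m, hv, -, hd⟩ := h d
    exact tsum_ite_append_singleton_prefix_eq_one hv ⟨m ++ (c.map τ).flatten, by simp [hd]⟩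
  · refine ENNReal.tsum_eq_zero.2 fun v => if_neg ?_
    rintro ⟨r, hr⟩
    refine hsu ⟨h.prefix_of_flatten_eq_append hdisj hτ (A := v.1 :: r) (by simp [v.2])
      (by simp [← hr]), ?_⟩
    rintro rfl
    simpa using congrArg List.length hr

theorem ite_flatten_eq_add_tsum_ite_prefix_bow [DecidableEq L] [DecidableEq V]
    (h : IsBowMarking Vbow Vmid τ) (hdisj : Disjoint Vbow Vmid) (hτ : Function.Injective τ)
    (s u : List L) :
    ((if (s.map τ).flatten = (u.map τ).flatten then 1 else 0) +
      ∑' v : Vbow, (if (s.map τ).flatten ++ [v.1] <+: (u.map τ).flatten then 1 else 0) : ℝ≥0∞)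
      = if s <+: u then 1 else 0 := by
  simp only [h.tsum_ite_prefix_bow hdisj hτ, (h.flatten_injective hdisj hτ).eq_iff]
  by_cases hsu : s = u <;> simp [hsu]

theorem pushforward_add_tsum_prefP_bow [DecidableEq V] (h : IsBowMarking Vbow Vmid τ)
    (hdisj : Disjoint Vbow Vmid) (hτ : Function.Injective τ) {p : List L → ℝ≥0∞}
    {q : List V → ℝ≥0∞} (hq : ∀ x, q x = ∑' u, p u * if x = (u.map τ).flatten then 1 else 0)
    (s : List L) :
    q (s.map τ).flatten + ∑' v : Vbow, prefP q ((s.map τ).flatten ++ [v.1]) = prefP p s := by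
  classical
  simp_rw [prefP_pushforward hq, hq, prefP_eq_tsum p s]
  rw [ENNReal.tsum_comm, ← ENNReal.tsum_add]
  refine tsum_congr fun u => ?_
  rw [ENNReal.tsum_mul_left, ← mul_add, h.ite_flatten_eq_add_tsum_ite_prefix_bow hdisj hτ]

theorem prefP_mul_eosP_add_tsum_condP [DecidableEq V] (h : IsBowMarking Vbow Vmid τ)
    (hdisj : Disjoint Vbow Vmid) (hτ : Function.Injective τ) {p : List L → ℝ≥0∞}
    {q : List V → ℝ≥0∞} (hq : ∀ x, q x = ∑' u, p u * if x = (u.map τ).flatten then 1 else 0)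
    {s : List L} (h0 : prefP q (s.map τ).flatten ≠ 0) (htop : prefP q (s.map τ).flatten ≠ ⊤) :
    prefP q (s.map τ).flatten *
      (eosP q (s.map τ).flatten + ∑' v : Vbow, condP q v.1 (s.map τ).flatten) = prefP p s := by
  simp only [eosP, condP, div_eq_mul_inv, ENNReal.tsum_mul_right, ← add_mul]
  rw [mul_comm, mul_assoc, ENNReal.inv_mul_cancel h0 htop, mul_one,
    h.pushforward_add_tsum_prefP_bow hdisj hτ hq]

end IsBowMarking

theorem stmt_11_general {L V : Type*} [DecidableEq V] (Vbow Vmid : Set V)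
    (hdisj : Disjoint Vbow Vmid)
    (τ : L → List V) (hτ : Function.Injective τ)
    (hshape : ∀ w : L, ∃ (v : V) (m : List V),
      v ∈ Vbow ∧ (∀ a ∈ m, a ∈ Vmid) ∧ τ w = v :: m)
    (p : List L → ℝ≥0∞) (hp : ∑' u : List L, p u = 1)
    (q : List V → ℝ≥0∞)
    (hq : ∀ x : List V, q x = ∑' u : List L, p u * (if x = (u.map τ).flatten then 1 else 0))
    (wlt : List L) (w : L)
    (hposq : ∀ s : List V, s <+: τ w → prefP q ((wlt.map τ).flatten ++ s) ≠ 0) :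
    prefP p (wlt ++ [w]) / prefP p wlt =
      (∏ i : Fin (τ w).length,
        condP q ((τ w).get i) ((wlt.map τ).flatten ++ (τ w).take i)) *
      (eosP q ((wlt.map τ).flatten ++ τ w) +
        ∑' v : Vbow, condP q v.val ((wlt.map τ).flatten ++ τ w)) /
      (eosP q ((wlt.map τ).flatten) +
        ∑' v : Vbow, condP q v.val ((wlt.map τ).flatten)) := by
  have hbow : IsBowMarking Vbow Vmid τ := hshape
  set X := (wlt.map τ).flatten
  have htop : ∀ x, prefP q x ≠ ⊤ := fun x =>
    ne_top_of_le_ne_top (by simp [hp]) (prefP_pushforward_le_tsum hq x)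
  have hX0 : prefP q X ≠ 0 := by simpa using hposq [] List.nil_prefix
  have hXw : ((wlt ++ [w]).map τ).flatten = X ++ τ w := by simp [X]
  have hw := hbow.prefP_mul_eosP_add_tsum_condP hdisj hτ hq (s := wlt ++ [w])
    (by simpa [hXw] using hposq _ List.prefix_rfl) (htop _)
  rw [hXw] at hw
  calc prefP p (wlt ++ [w]) / prefP p wlt
      = prefP q (X ++ τ w) * _ / (prefP q X * _) := by
        rw [hw, hbow.prefP_mul_eosP_add_tsum_condP hdisj hτ hq hX0 (htop X)]
    _ = prefP q X * (_ * _) / (prefP q X * _) := by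
        rw [prefP_append_eq_mul_prod_condP (τ w) hposq htop, mul_assoc]
    _ = _ := ENNReal.mul_div_mul_left _ _ hX0 (htop X)

theorem stmt_11 {L V : Type*} [Countable L] [Countable V] [DecidableEq V] (Vbow Vmid : Set V)
    (hdisj : Disjoint Vbow Vmid) (hcover : Vbow ∪ Vmid = Set.univ)
    (τ : L → List V) (hτ : Function.Injective τ)
    (hshape : ∀ w : L, ∃ (v : V) (m : List V),
      v ∈ Vbow ∧ (∀ a ∈ m, a ∈ Vmid) ∧ τ w = v :: m)
    (p : List L → ℝ≥0∞) (hp : ∑' u : List L, p u = 1)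
    (q : List V → ℝ≥0∞)
    (hq : ∀ x : List V, q x = ∑' u : List L, p u * (if x = (u.map τ).flatten then 1 else 0))
    (wlt : List L) (w : L)
    (hposw : prefP p wlt ≠ 0)
    (hposq : ∀ s : List V, s <+: τ w → prefP q ((wlt.map τ).flatten ++ s) ≠ 0)
    (hden : eosP q ((wlt.map τ).flatten) +
      ∑' v : Vbow, condP q v.val ((wlt.map τ).flatten) ≠ 0) :
    prefP p (wlt ++ [w]) / prefP p wlt =
      (∏ i : Fin (τ w).length,
        condP q ((τ w).get i) ((wlt.map τ).flatten ++ (τ w).take i)) *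
      (eosP q ((wlt.map τ).flatten ++ τ w) +
        ∑' v : Vbow, condP q v.val ((wlt.map τ).flatten ++ τ w)) /
      (eosP q ((wlt.map τ).flatten) +
        ∑' v : Vbow, condP q v.val ((wlt.map τ).flatten)) :=
  stmt_11_general Vbow Vmid hdisj τ hτ hshape p hp q hq wlt w hposq
end

section
/- Let τ_mid : L → V_mid* and τ : L → V_bow ∘ V_mid* be two injective word-level tokenisers, where τ(w) is τ_mid(w) with its first symbol replaced by a bow-marked variant (formally: there is a bijection β : V_mid → V_bow with τ(w) = β(τ_mid(w)_1) ∘ τ_mid(w)_{2:}). Define T : L* → V* by T(w_1…w_n) = τ_mid(w_1) ∘ τ(w_2) ∘ … ∘ τ(w_n) (first word unmarked). Then T is injective. -/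
/-- Concatenative extension of a tokeniser pair where the first word of a
sequence is tokenised with `τmid` (unmarked) and all later words with `τ`. -/
def firstUnmarkedExt {L V : Type*} (τmid τ : L → List V) : List L → List V
  | [] => []
  | w :: ws => τmid w ++ (ws.map τ).flatten

/-!
Every word after the first is encoded as one bow-marked symbol followed by mid symbols, while
`τmid` of the first word consists of mid symbols only. So the first bow-marked symbol of an
encoding marks where the first word ends, and each later bow-marked symbol where the next word
begins; injectivity of `τmid` and `τ` then recovers the words one at a time.
-/

namespace List

theorem takeWhile_append_of_forall_of_head?_not {α : Type*} {p : α → Prop} [DecidablePred p]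
    {xs ys : List α} (hxs : ∀ a ∈ xs, p a) (hys : ∀ a ∈ ys.head?, ¬ p a) :
    (xs ++ ys).takeWhile (fun a => decide (p a)) = xs := by
  rw [takeWhile_append_of_pos (by simpa using hxs)]
  cases ys with
  | nil => simp
  | cons b t => simpa using hys b rfl

theorem append_inj_of_forall_of_head?_not {α : Type*} {p : α → Prop} {xs₁ xs₂ ys₁ ys₂ : List α}
    (hxs₁ : ∀ a ∈ xs₁, p a) (hxs₂ : ∀ a ∈ xs₂, p a)
    (hys₁ : ∀ a ∈ ys₁.head?, ¬ p a) (hys₂ : ∀ a ∈ ys₂.head?, ¬ p a)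
    (h : xs₁ ++ ys₁ = xs₂ ++ ys₂) : xs₁ = xs₂ ∧ ys₁ = ys₂ := by
  classical
  have hxs : xs₁ = xs₂ := by
    rw [← takeWhile_append_of_forall_of_head?_not hxs₁ hys₁, h,
      takeWhile_append_of_forall_of_head?_not hxs₂ hys₂]
  subst hxs
  exact ⟨rfl, append_cancel_left h⟩

end List

section MarkedCode

variable {L V : Type*} {S : Set V} {f : L → List V}

theorem head?_flatten_map_notMem
    (hf : ∀ w, ∃ b l, f w = b :: l ∧ b ∉ S ∧ ∀ a ∈ l, a ∈ S) (ws : List L) :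
    ∀ a ∈ (ws.map f).flatten.head?, a ∉ S := by
  cases ws with
  | nil => simp
  | cons w ws =>
    obtain ⟨b, l, hw, hb, -⟩ := hf w
    simpa [hw] using hb

theorem flatten_map_injective (hinj : Function.Injective f)
    (hf : ∀ w, ∃ b l, f w = b :: l ∧ b ∉ S ∧ ∀ a ∈ l, a ∈ S) :
    Function.Injective fun ws : List L => (ws.map f).flatten := by
  intro ws₁
  induction ws₁ with
  | nil =>
    rintro (_ | ⟨w, ws⟩) h
    · rfl
    · obtain ⟨b, l, hw, -⟩ := hf w
      simp [hw] at h
  | cons w₁ ws₁ ih =>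
    rintro (_ | ⟨w₂, ws₂⟩) h
    · obtain ⟨b, l, hw, -⟩ := hf w₁
      simp [hw] at h
    · obtain ⟨b₁, l₁, hw₁, -, hl₁⟩ := hf w₁
      obtain ⟨b₂, l₂, hw₂, -, hl₂⟩ := hf w₂
      simp only [List.map_cons, List.flatten_cons, hw₁, hw₂, List.cons_append,
        List.cons.injEq] at h
      obtain ⟨rfl, h⟩ := h
      obtain ⟨rfl, hws⟩ := List.append_inj_of_forall_of_head?_not hl₁ hl₂
        (head?_flatten_map_notMem hf ws₁) (head?_flatten_map_notMem hf ws₂) h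
      rw [hinj (hw₁.trans hw₂.symm), ih hws]

end MarkedCode

theorem stmt_19_general {L V : Type*} (Vbow Vmid : Set V)
    (hdisj : Disjoint Vbow Vmid)
    (β : V → V) (hβ : Set.BijOn β Vmid Vbow)
    (τmid : L → List V) (hτmid : Function.Injective τmid)
    (hmidshape : ∀ w : L, τmid w ≠ [] ∧ ∀ a ∈ τmid w, a ∈ Vmid)
    (τ : L → List V) (hτ : Function.Injective τ)
    (hrel : ∀ (w : L) (a : V) (l : List V), τmid w = a :: l → τ w = β a :: l) :
    Function.Injective (firstUnmarkedExt τmid τ) := by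
  have hτshape : ∀ w, ∃ b l, τ w = b :: l ∧ b ∉ Vmid ∧ ∀ a ∈ l, a ∈ Vmid := by
    intro w
    obtain ⟨hne, hmid⟩ := hmidshape w
    obtain ⟨a, l, hal⟩ := List.exists_cons_of_ne_nil hne
    rw [hal] at hmid
    exact ⟨β a, l, hrel w a l hal, hdisj.notMem_of_mem_left (hβ.mapsTo (hmid a (by simp))),
      fun x hx => hmid x (by simp [hx])⟩
  rintro (_ | ⟨w₁, ws₁⟩) (_ | ⟨w₂, ws₂⟩) h
  · rfl
  · exact absurd (List.append_eq_nil_iff.mp h.symm).1 (hmidshape w₂).1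
  · exact absurd (List.append_eq_nil_iff.mp h).1 (hmidshape w₁).1
  · obtain ⟨hw, hws⟩ := List.append_inj_of_forall_of_head?_not (hmidshape w₁).2
      (hmidshape w₂).2 (head?_flatten_map_notMem hτshape ws₁)
      (head?_flatten_map_notMem hτshape ws₂) h
    rw [hτmid hw, flatten_map_injective hτ hτshape hws]

theorem stmt_19 {L V : Type*} (Vbow Vmid : Set V)
    (hdisj : Disjoint Vbow Vmid) (hcover : Vbow ∪ Vmid = Set.univ)
    (β : V → V) (hβ : Set.BijOn β Vmid Vbow)
    (τmid : L → List V) (hτmid : Function.Injective τmid)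
    (hmidshape : ∀ w : L, τmid w ≠ [] ∧ ∀ a ∈ τmid w, a ∈ Vmid)
    (τ : L → List V) (hτ : Function.Injective τ)
    (hrel : ∀ (w : L) (a : V) (l : List V), τmid w = a :: l → τ w = β a :: l) :
    Function.Injective (firstUnmarkedExt τmid τ) :=
  stmt_19_general Vbow Vmid hdisj β hβ τmid hτmid hmidshape τ hτ hrel
end
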